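/- Let μ be the uniform distribution over codewords of a binary linear code C ⊆ F_2^n with dual distance at least ζn and unique decoding radius ζn/2 (any two distinct codewords are at Hamming distance > ζn). Set δ = min{1/(16e), ζ/8}. Then the test 'accept iff there exists a codeword c within Hamming distance 2δn of the input' distinguishes T_δ μ from the uniform distribution ν on {0,1}^n with probability 1 - o(1): under T_δ μ such a codeword exists w.h.p., while under ν no codeword is within distance 2δn w.h.p. -/

import Mathlib

/-!
Under `T_δ μ` the input agrees with its codeword `c` outside the resampled coordinates, so the
test can only reject when more than `2δn` coordinates are resampled. By the exponential Markov
inequality with base `2` this has probability at most `((1 + δ) / 2 ^ (2δ)) ^ n`, which decays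
because `1 + δ < e ^ δ < 4 ^ δ`.

Under `ν`, put `r = ⌊2δn⌋`. Below `n / 3` binomial coefficients at least double at each step,
so an `r`-ball has at most `(r + 1) 2⁻ʳ C(n, 2r)` points. The spheres of radius `2r` around
distinct codewords are disjoint since the minimum distance exceeds `4r`, whence
`|C| C(n, 2r) ≤ 2 ^ n`, and the `r`-neighbourhood of the code is at most a `(r + 1) 2⁻ʳ`
fraction of the space.
-/

open scoped Classical
open Finset Filter Topology

namespace Nat

theorem two_mul_choose_le_choose_succ {n m : ℕ} (h : 3 * m + 2 ≤ n) :
    2 * n.choose m ≤ n.choose (m + 1) := by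
  refine Nat.le_of_mul_le_mul_right (c := m + 1) ?_ m.succ_pos
  calc 2 * n.choose m * (m + 1) = n.choose m * (2 * (m + 1)) := by ring
    _ ≤ n.choose m * (n - m) := Nat.mul_le_mul_left _ (by omega)
    _ = n.choose (m + 1) * (m + 1) := (Nat.choose_succ_right_eq n m).symm

theorem two_pow_mul_choose_le_choose_add {n j i : ℕ} (h : 3 * (j + i) ≤ n + 1) :
    2 ^ i * n.choose j ≤ n.choose (j + i) := by
  induction i with
  | zero => simp
  | succ i ih =>
    calc 2 ^ (i + 1) * n.choose j = 2 * (2 ^ i * n.choose j) := by ring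
      _ ≤ 2 * n.choose (j + i) := Nat.mul_le_mul_left _ (ih (by omega))
      _ ≤ n.choose (j + (i + 1)) := two_mul_choose_le_choose_succ (by omega)

theorem two_pow_mul_sum_choose_le {n r : ℕ} (h : 6 * r ≤ n + 1) :
    2 ^ r * ∑ j ∈ range (r + 1), n.choose j ≤ (r + 1) * n.choose (2 * r) := by
  calc 2 ^ r * ∑ j ∈ range (r + 1), n.choose j = ∑ j ∈ range (r + 1), 2 ^ r * n.choose j :=
        mul_sum _ _ _
    _ ≤ ∑ _j ∈ range (r + 1), n.choose (2 * r) := sum_le_sum fun j hj => ?_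
    _ = (r + 1) * n.choose (2 * r) := by rw [sum_const, card_range, smul_eq_mul]
  have hj : j ≤ r := Nat.lt_succ_iff.1 (mem_range.1 hj)
  calc 2 ^ r * n.choose j ≤ 2 ^ (2 * r - j) * n.choose j :=
        Nat.mul_le_mul_right _ (Nat.pow_le_pow_right two_pos (by omega))
    _ ≤ n.choose (j + (2 * r - j)) := two_pow_mul_choose_le_choose_add (by omega)
    _ = n.choose (2 * r) := by rw [Nat.add_sub_cancel' (by omega)]

end Nat

section HammingBalls

variable {ι : Type*} [Fintype ι] [DecidableEq ι]

theorem card_hammingDist_eq (c : ι → ZMod 2) (j : ℕ) :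
    #{z | hammingDist c z = j} = (Fintype.card ι).choose j := by
  have flip_iff : ∀ a b : ZMod 2, a ≠ b ↔ b = a + 1 := by decide
  have support_flip : ∀ s : Finset ι,
      ({i | c i ≠ if i ∈ s then c i + 1 else c i} : Finset ι) = s := by
    intro s; ext i
    by_cases h : i ∈ s <;> simp [h]
  rw [← card_univ, ← card_powersetCard]
  refine card_nbij' (fun z => ({i | c i ≠ z i} : Finset ι))
    (fun s i => if i ∈ s then c i + 1 else c i) ?_ ?_ ?_ ?_
  · intro z hz
    simpa [hammingDist] using hz
  · intro s hs
    simpa [hammingDist, support_flip] using hs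
  · intro z _
    funext i
    by_cases h : c i = z i
    · simp [h]
    · simp [(flip_iff _ _).1 h]
  · intro s _
    exact support_flip s

theorem card_hammingDist_le_eq_sum_choose (c : ι → ZMod 2) (r : ℕ) :
    #{z | hammingDist c z ≤ r} = ∑ j ∈ range (r + 1), (Fintype.card ι).choose j := by
  rw [card_eq_sum_card_fiberwise (f := hammingDist c) (t := range (r + 1))]
  · refine sum_congr rfl fun j hj => ?_
    rw [← card_hammingDist_eq c j, filter_filter]
    exact congrArg card <| filter_congr fun z _ =>
      ⟨And.right, fun h => ⟨h ▸ Nat.lt_succ_iff.1 (mem_range.1 hj), h⟩⟩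
  · intro z hz
    simpa [Nat.lt_succ_iff] using hz

theorem card_mul_choose_le_two_pow {S : Finset (ι → ZMod 2)} {m : ℕ}
    (hsep : ∀ c ∈ S, ∀ c' ∈ S, c ≠ c' → 2 * m < hammingDist c c') :
    #S * (Fintype.card ι).choose m ≤ 2 ^ Fintype.card ι := by
  have hdisj : (S : Set (ι → ZMod 2)).PairwiseDisjoint
      fun c => ({z | hammingDist c z = m} : Finset (ι → ZMod 2)) := by
    intro c hc c' hc' hne
    refine disjoint_left.2 fun z hz hz' => ?_
    simp only [mem_filter, mem_univ, true_and] at hz hz'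
    have := hammingDist_triangle c z c'
    rw [hammingDist_comm z c'] at this
    linarith [hsep c hc c' hc' hne]
  calc #S * (Fintype.card ι).choose m = ∑ c ∈ S, #{z | hammingDist c z = m} := by
        simp [card_hammingDist_eq]
    _ = #(S.biUnion fun c => {z | hammingDist c z = m}) := (card_biUnion hdisj).symm
    _ ≤ Fintype.card (ι → ZMod 2) := card_le_univ _
    _ = 2 ^ Fintype.card ι := by simp

theorem card_exists_hammingDist_le_le_mul_sum_choose (S : Finset (ι → ZMod 2)) (r : ℕ) :
    #{z | ∃ c ∈ S, hammingDist c z ≤ r} ≤ #S * ∑ j ∈ range (r + 1), (Fintype.card ι).choose j := by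
  calc #{z | ∃ c ∈ S, hammingDist c z ≤ r} ≤ #(S.biUnion fun c => {z | hammingDist c z ≤ r}) :=
        card_le_card fun z hz => by simpa using hz
    _ ≤ ∑ c ∈ S, #{z | hammingDist c z ≤ r} := card_biUnion_le
    _ = #S * ∑ j ∈ range (r + 1), (Fintype.card ι).choose j := by
        simp [card_hammingDist_le_eq_sum_choose]

theorem two_pow_mul_card_exists_hammingDist_le {S : Finset (ι → ZMod 2)} {r : ℕ}
    (hr : 6 * r ≤ Fintype.card ι + 1)
    (hsep : ∀ c ∈ S, ∀ c' ∈ S, c ≠ c' → 4 * r < hammingDist c c') :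
    2 ^ r * #{z | ∃ c ∈ S, hammingDist c z ≤ r} ≤ (r + 1) * 2 ^ Fintype.card ι :=
  calc 2 ^ r * #{z | ∃ c ∈ S, hammingDist c z ≤ r}
      ≤ 2 ^ r * (#S * ∑ j ∈ range (r + 1), (Fintype.card ι).choose j) :=
        Nat.mul_le_mul_left _ (card_exists_hammingDist_le_le_mul_sum_choose S r)
    _ = #S * (2 ^ r * ∑ j ∈ range (r + 1), (Fintype.card ι).choose j) := by ring
    _ ≤ #S * ((r + 1) * (Fintype.card ι).choose (2 * r)) :=
        Nat.mul_le_mul_left _ (Nat.two_pow_mul_sum_choose_le hr)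
    _ = (r + 1) * (#S * (Fintype.card ι).choose (2 * r)) := by ring
    _ ≤ (r + 1) * 2 ^ Fintype.card ι :=
        Nat.mul_le_mul_left _ (card_mul_choose_le_two_pow fun c hc c' hc' hne => by
          linarith [hsep c hc c' hc' hne])

end HammingBalls

section Resampling

variable {ι α : Type*} [Fintype ι]

theorem hammingDist_ite_le_card [DecidableEq α] (b : ι → Bool) (c y : ι → α) :
    hammingDist c (fun i => if b i then y i else c i) ≤ #{i | b i} :=
  card_le_card <| monotone_filter_right _ fun i _ hi => by
    by_contra hb
    simp [hb] at hi

variable [DecidableEq ι]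

theorem sum_pow_card_mul_pow_card_sub {R : Type*} [CommSemiring R] (a b : R) :
    ∑ f : ι → Bool, a ^ #{i | f i} * b ^ (Fintype.card ι - #{i | f i})
      = (a + b) ^ Fintype.card ι := by
  have hprod : ∀ f : ι → Bool,
      ∏ i, (if f i then a else b) = a ^ #{i | f i} * b ^ (Fintype.card ι - #{i | f i}) := by
    intro f
    rw [prod_ite, prod_const, prod_const, filter_not, card_sdiff_of_subset (filter_subset _ _),
      card_univ]
  rw [← sum_congr rfl fun f _ => hprod f]
  calc _ = ∏ _i : ι, ∑ t : Bool, (if t then a else b) := (Fintype.prod_sum _).symm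
    _ = (a + b) ^ Fintype.card ι := by simp

/-- Exponential Markov inequality: the indicator of `t < k` is at most `x ^ k / x ^ t`. -/
theorem sum_tail_le_add_pow_div_rpow {a b x : ℝ} (ha : 0 ≤ a) (hb : 0 ≤ b) (hx : 1 ≤ x) (t : ℝ) :
    ∑ f : ι → Bool, (if t < #{i | f i} then a ^ #{i | f i} * b ^ (Fintype.card ι - #{i | f i})
      else 0) ≤ (x * a + b) ^ Fintype.card ι / x ^ t := by
  rw [← sum_pow_card_mul_pow_card_sub, sum_div]
  refine sum_le_sum fun f _ => ?_
  set k := #{i | f i}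
  have hx0 : 0 < x := by linarith
  split_ifs with hk
  · have hxk : x ^ t ≤ x ^ k := by
      rw [← Real.rpow_natCast]
      exact Real.rpow_le_rpow_of_exponent_le hx hk.le
    calc a ^ k * b ^ (Fintype.card ι - k) = a ^ k * b ^ (Fintype.card ι - k) * x ^ t / x ^ t := by
          field_simp
      _ ≤ a ^ k * b ^ (Fintype.card ι - k) * x ^ k / x ^ t := by gcongr
      _ = (x * a) ^ k * b ^ (Fintype.card ι - k) / x ^ t := by ring
  · positivity

theorem sum_one_div_card_mul_mul_one_div_card {σ β γ : Type*} [Fintype β] [Fintype γ] [Nonempty γ]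
    {S : Finset σ} (hS : S.Nonempty) (g : β → ℝ) :
    ∑ _c ∈ S, ∑ b, ∑ _y : γ, 1 / #S * g b * (1 / Fintype.card γ) = ∑ b, g b := by
  have hS' : (#S : ℝ) ≠ 0 := by exact_mod_cast hS.card_pos.ne'
  simp only [sum_const, card_univ, nsmul_eq_mul, ← mul_sum, ← sum_mul]
  field_simp

variable [Fintype α] (S : Finset (ι → α)) {p : ℝ} (accept : (ι → α) → Prop) [DecidablePred accept]

theorem sum_resample_le_one [Nonempty α] (hS : S.Nonempty) (hp0 : 0 ≤ p) (hp1 : p ≤ 1) :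
    ∑ c ∈ S, ∑ b : ι → Bool, ∑ y : ι → α,
      1 / #S * p ^ #{i | b i} * (1 - p) ^ (Fintype.card ι - #{i | b i})
        * (1 / Fintype.card (ι → α))
        * (if accept (fun i => if b i then y i else c i) then (1 : ℝ) else 0) ≤ 1 := by
  calc _ ≤ ∑ c ∈ S, ∑ b : ι → Bool, ∑ y : ι → α,
        1 / #S * (p ^ #{i | b i} * (1 - p) ^ (Fintype.card ι - #{i | b i}))
          * (1 / Fintype.card (ι → α)) := by
        refine sum_le_sum fun c _ => sum_le_sum fun b _ => sum_le_sum fun y _ => ?_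
        have hw : 0 ≤ 1 / #S * p ^ #{i | b i} * (1 - p) ^ (Fintype.card ι - #{i | b i})
            * (1 / Fintype.card (ι → α) : ℝ) :=
          mul_nonneg (mul_nonneg (by positivity) (pow_nonneg (sub_nonneg.2 hp1) _)) (by positivity)
        rw [← mul_assoc (1 / (#S : ℝ))]
        refine (mul_le_of_le_one_right hw ?_)
        split_ifs <;> norm_num
    _ = 1 := by
        rw [sum_one_div_card_mul_mul_one_div_card hS, sum_pow_card_mul_pow_card_sub,
          add_sub_cancel, one_pow]

theorem one_sub_sum_tail_le_sum_resample [Nonempty α] [DecidableEq α] (hS : S.Nonempty)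
    (hp0 : 0 ≤ p) (hp1 : p ≤ 1) {t : ℝ}
    (haccept : ∀ c ∈ S, ∀ z, (hammingDist c z : ℝ) ≤ t → accept z) :
    1 - ∑ b : ι → Bool, (if t < #{i | b i}
        then p ^ #{i | b i} * (1 - p) ^ (Fintype.card ι - #{i | b i}) else 0)
      ≤ ∑ c ∈ S, ∑ b : ι → Bool, ∑ y : ι → α,
        1 / #S * p ^ #{i | b i} * (1 - p) ^ (Fintype.card ι - #{i | b i})
          * (1 / Fintype.card (ι → α))
          * (if accept (fun i => if b i then y i else c i) then (1 : ℝ) else 0) := by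
  have hw : ∀ b : ι → Bool, 0 ≤ p ^ #{i | b i} * (1 - p) ^ (Fintype.card ι - #{i | b i}) :=
    fun b => mul_nonneg (by positivity) (pow_nonneg (sub_nonneg.2 hp1) _)
  have hw1 : ∑ b : ι → Bool, p ^ #{i | b i} * (1 - p) ^ (Fintype.card ι - #{i | b i}) = 1 := by
    rw [sum_pow_card_mul_pow_card_sub, add_sub_cancel, one_pow]
  calc _ = ∑ b : ι → Bool, (p ^ #{i | b i} * (1 - p) ^ (Fintype.card ι - #{i | b i})
          - if t < #{i | b i} then p ^ #{i | b i} * (1 - p) ^ (Fintype.card ι - #{i | b i})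
            else 0) := by rw [sum_sub_distrib, hw1]
    _ = ∑ b : ι → Bool, (if t < #{i | b i}
        then 0 else p ^ #{i | b i} * (1 - p) ^ (Fintype.card ι - #{i | b i})) :=
        sum_congr rfl fun b _ => by split_ifs <;> ring
    _ = _ := (sum_one_div_card_mul_mul_one_div_card hS _).symm
    _ ≤ _ := by
        refine sum_le_sum fun c hc => sum_le_sum fun b _ => sum_le_sum fun y _ => ?_
        by_cases hk : t < #{i | b i}
        · rw [if_pos hk, mul_zero, zero_mul, mul_assoc (1 / (#S : ℝ))]
          exact mul_nonneg (mul_nonneg (mul_nonneg (by positivity) (hw b)) (by positivity))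
            (by split_ifs <;> norm_num)
        · have hacc : accept fun i => if b i then y i else c i :=
            haccept c hc _ ((Nat.cast_le.2 (hammingDist_ite_le_card b c y)).trans (not_lt.1 hk))
          rw [if_neg hk, if_pos hacc]
          exact le_of_eq (by ring)

end Resampling

theorem one_add_lt_two_rpow_two_mul {δ : ℝ} (hδ : 0 < δ) : 1 + δ < 2 ^ (2 * δ) := by
  rw [Real.rpow_def_of_pos two_pos, add_comm]
  refine (Real.add_one_lt_exp hδ.ne').trans_le (Real.exp_le_exp.2 ?_)
  nlinarith [Real.log_two_gt_d9]

theorem tendsto_sum_resample_accept (C : (n : ℕ) → Set (Fin n → ZMod 2))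
    (hC : ∀ n, (C n).Nonempty) {δ : ℝ} (hδ0 : 0 < δ) (hδ1 : δ ≤ 1) :
    Tendsto (fun n : ℕ =>
      ∑ c ∈ Finset.univ.filter (fun c : Fin n → ZMod 2 => c ∈ C n),
        ∑ b : Fin n → Bool, ∑ y : Fin n → ZMod 2,
          (1 / (Nat.card (C n) : ℝ))
            * δ ^ (Finset.univ.filter (fun i => b i = true)).card
            * (1 - δ) ^ (n - (Finset.univ.filter (fun i => b i = true)).card)
            * (1 / 2 ^ n)
            * (if ∃ c' ∈ C n,
                (hammingDist c' (fun i => if b i then y i else c i) : ℝ) ≤ 2 * δ * n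
              then (1 : ℝ) else 0))
      atTop (𝓝 1) := by
  have hq : (1 + δ) / 2 ^ (2 * δ) < 1 :=
    (div_lt_one (by positivity)).2 (one_add_lt_two_rpow_two_mul hδ0)
  have hS : ∀ n, ({c | c ∈ C n} : Finset (Fin n → ZMod 2)).Nonempty := fun n =>
    let ⟨c, hc⟩ := hC n; ⟨c, by simpa using hc⟩
  have hcard : ∀ n, Nat.card (C n) = #({c | c ∈ C n} : Finset (Fin n → ZMod 2)) := fun n => by
    rw [Nat.card_eq_fintype_card, Fintype.card_subtype]
  refine tendsto_of_tendsto_of_tendsto_of_le_of_le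
    (by simpa using (tendsto_pow_atTop_nhds_zero_of_lt_one (by positivity) hq).const_sub 1)
    tendsto_const_nhds (fun n => ?_) (fun n => ?_)
  · have hlow := one_sub_sum_tail_le_sum_resample _
      (fun z => ∃ c' ∈ C n, (hammingDist c' z : ℝ) ≤ 2 * δ * n) (hS n) hδ0.le hδ1
      fun c hc z hz => ⟨c, by simpa using hc, hz⟩
    have htail := sum_tail_le_add_pow_div_rpow (ι := Fin n) hδ0.le (sub_nonneg.2 hδ1)
      one_le_two (2 * δ * n)
    simp only [Fintype.card_fin, Fintype.card_fun, ZMod.card, Nat.cast_pow, Nat.cast_ofNat]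
      at hlow htail
    rw [Real.rpow_mul_natCast zero_le_two, ← div_pow, show 2 * δ + (1 - δ) = 1 + δ by ring]
      at htail
    rw [hcard n]
    linarith
  · have hup := sum_resample_le_one _
      (fun z => ∃ c' ∈ C n, (hammingDist c' z : ℝ) ≤ 2 * δ * n) (hS n) hδ0.le hδ1
    simp only [Fintype.card_fin, Fintype.card_fun, ZMod.card, Nat.cast_pow, Nat.cast_ofNat]
      at hup
    rwa [hcard n]

theorem tendsto_succ_div_two_pow : Tendsto (fun k : ℕ => ((k : ℝ) + 1) / 2 ^ k) atTop (𝓝 0) := by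
  have h := (tendsto_self_mul_const_pow_of_lt_one (r := 1 / 2) (by norm_num) (by norm_num)).add
    (tendsto_pow_atTop_nhds_zero_of_lt_one (r := (1 / 2 : ℝ)) (by norm_num) (by norm_num))
  rw [add_zero] at h
  refine h.congr fun k => ?_
  rw [one_div_pow, add_div]
  ring

theorem tendsto_card_exists_hammingDist_le_div_two_pow (C : (n : ℕ) → Set (Fin n → ZMod 2))
    {δ : ℝ} (hδ0 : 0 < δ) (hδ : 12 * δ ≤ 1)
    (hdist : ∀ n, ∀ c ∈ C n, ∀ c' ∈ C n, c ≠ c' → 8 * δ * n < (hammingDist c c' : ℝ)) :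
    Tendsto (fun n : ℕ =>
      (Nat.card {z : Fin n → ZMod 2 // ∃ c ∈ C n, (hammingDist c z : ℝ) ≤ 2 * δ * n} : ℝ)
        / 2 ^ n)
      atTop (𝓝 0) := by
  refine squeeze_zero (fun n => by positivity) (fun n => ?_)
    (tendsto_succ_div_two_pow.comp (tendsto_nat_floor_mul_atTop (2 * δ) (by positivity)))
  set r := ⌊2 * δ * n⌋₊
  have hr : (r : ℝ) ≤ 2 * δ * n := Nat.floor_le (by positivity)
  have hcard : Nat.card {z : Fin n → ZMod 2 // ∃ c ∈ C n, (hammingDist c z : ℝ) ≤ 2 * δ * n}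
      = #{z | ∃ c ∈ ({c | c ∈ C n} : Finset _), hammingDist c z ≤ r} := by
    rw [Nat.card_eq_fintype_card, Fintype.card_subtype]
    refine congrArg card (filter_congr fun z _ => ?_)
    simp only [mem_filter, mem_univ, true_and, r, Nat.le_floor_iff (by positivity : 0 ≤ 2 * δ * n)]
  have key := two_pow_mul_card_exists_hammingDist_le (ι := Fin n) (r := r)
    (S := {c | c ∈ C n}) ?_ ?_
  rotate_left
  · have : (6 * r : ℝ) ≤ n + 1 := by nlinarith
    simp only [Fintype.card_fin]
    exact_mod_cast this
  · intro c hc c' hc' hne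
    simp only [mem_filter, mem_univ, true_and] at hc hc'
    exact_mod_cast (by linarith : (4 * r : ℝ) ≤ 8 * δ * n).trans_lt (hdist n c hc c' hc' hne)
  rw [hcard, Function.comp_apply, div_le_div_iff₀ (by positivity) (by positivity)]
  simp only [Fintype.card_fin] at key
  exact_mod_cast (mul_comm _ _).trans_le key

theorem stmt18_general (ζ : ℝ) (hζ : 0 < ζ)
    (C : (n : ℕ) → Submodule (ZMod 2) (Fin n → ZMod 2))
    (hdist : ∀ n, ∀ c ∈ C n, ∀ c' ∈ C n, c ≠ c' → ζ * n < (hammingDist c c' : ℝ))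
    (δ : ℝ) (hδ : δ = min (1 / (16 * Real.exp 1)) (ζ / 8)) :
    Filter.Tendsto (fun n : ℕ =>
      ∑ c ∈ Finset.univ.filter (fun c : Fin n → ZMod 2 => c ∈ C n),
        ∑ b : Fin n → Bool, ∑ y : Fin n → ZMod 2,
          (1 / (Nat.card (C n) : ℝ))
            * δ ^ (Finset.univ.filter (fun i => b i = true)).card
            * (1 - δ) ^ (n - (Finset.univ.filter (fun i => b i = true)).card)
            * (1 / 2 ^ n)
            * (if ∃ c' ∈ C n,
                (hammingDist c' (fun i => if b i then y i else c i) : ℝ) ≤ 2 * δ * n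
              then (1 : ℝ) else 0))
      Filter.atTop (nhds 1) ∧
    Filter.Tendsto (fun n : ℕ =>
      (Nat.card {z : Fin n → ZMod 2 // ∃ c ∈ C n, (hammingDist c z : ℝ) ≤ 2 * δ * n} : ℝ)
        / 2 ^ n)
      Filter.atTop (nhds 0) := by
  have hδ0 : 0 < δ := hδ ▸ lt_min (by positivity) (by positivity)
  have hδζ : 8 * δ ≤ ζ := by linarith [hδ ▸ min_le_right (1 / (16 * Real.exp 1)) (ζ / 8)]
  have hδ12 : 12 * δ ≤ 1 := by
    have h := hδ ▸ min_le_left (1 / (16 * Real.exp 1)) (ζ / 8)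
    rw [le_div_iff₀ (by positivity)] at h
    nlinarith [Real.add_one_le_exp 1]
  exact ⟨tendsto_sum_resample_accept (fun n => C n) (fun n => ⟨0, (C n).zero_mem⟩) hδ0
      (by linarith),
    tendsto_card_exists_hammingDist_le_div_two_pow (fun n => C n) hδ0 hδ12
      fun n c hc c' hc' hne => (by nlinarith [n.cast_nonneg (α := ℝ)] : 8 * δ * n ≤ ζ * n).trans_lt
        (hdist n c hc c' hc' hne)⟩

/-- Theorem 3 / proof of Theorem 1.2 of the paper: for a family of
binary linear codes `C n ⊆ F₂ⁿ` with dual distance ≥ ζn and pairwise distance > ζn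
(unique decoding radius `ζn/2`), let `δ = min(1/(16e), ζ/8)` and let `μ` be uniform
on codewords. The test "accept iff some codeword is within Hamming distance `2δn`"
accepts `T_δ μ` (each coordinate of a random codeword resampled uniformly with
probability `δ`) with probability `→ 1`, while under the uniform distribution `ν`
it accepts with probability `→ 0`. -/
theorem stmt18 (ζ : ℝ) (hζ : 0 < ζ)
    (C : (n : ℕ) → Submodule (ZMod 2) (Fin n → ZMod 2))
    (hdual : ∀ n, ∀ y : Fin n → ZMod 2, y ≠ 0 →
      (∀ c ∈ C n, ∑ i, y i * c i = 0) → ζ * n ≤ (hammingNorm y : ℝ))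
    (hdist : ∀ n, ∀ c ∈ C n, ∀ c' ∈ C n, c ≠ c' → ζ * n < (hammingDist c c' : ℝ))
    (δ : ℝ) (hδ : δ = min (1 / (16 * Real.exp 1)) (ζ / 8)) :
    Filter.Tendsto (fun n : ℕ =>
      ∑ c ∈ Finset.univ.filter (fun c : Fin n → ZMod 2 => c ∈ C n),
        ∑ b : Fin n → Bool, ∑ y : Fin n → ZMod 2,
          (1 / (Nat.card (C n) : ℝ))
            * δ ^ (Finset.univ.filter (fun i => b i = true)).card
            * (1 - δ) ^ (n - (Finset.univ.filter (fun i => b i = true)).card)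
            * (1 / 2 ^ n)
            * (if ∃ c' ∈ C n,
                (hammingDist c' (fun i => if b i then y i else c i) : ℝ) ≤ 2 * δ * n
              then (1 : ℝ) else 0))
      Filter.atTop (nhds 1) ∧
    Filter.Tendsto (fun n : ℕ =>
      (Nat.card {z : Fin n → ZMod 2 // ∃ c ∈ C n, (hammingDist c z : ℝ) ≤ 2 * δ * n} : ℝ)
        / 2 ^ n)
      Filter.atTop (nhds 0) :=
  stmt18_general ζ hζ C hdist δ hδ
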